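/- With J_Δ = (m_1,…,m_n) where m_v = ∏_{σ∈Δ, v∉σ} x_σ, and J'_Δ = (m'_1,…,m'_n) as in the Peeva–Velasco refinement, for any two subsets σ = {u_1,…,u_s} and τ = {v_1,…,v_t} of {1,…,n}: lcm(m'_{u_1},…,m'_{u_s}) = lcm(m'_{v_1},…,m'_{v_t}) if and only if lcm(m_{u_1},…,m_{u_s}) = lcm(m_{v_1},…,m_{v_t}), provided Δ is the Scarf complex of J_Δ (i.e., Δ is not the boundary of a simplex). -/

import Mathlib

/-
Both generators are squarefree products over a fixed family of faces: `m_v` over the faces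
of `Δ` not containing `v`, and `m'_v` over the facets and the nonempty codimension-one faces
of facets ("ridges") not containing `v`. Hence the lcm over `σ` is the product over the
members of the family not containing `σ`, and two such lcms agree iff `σ` and `τ` lie in
the same members of the family. For the refined family this is equivalent to lying in the
same faces: if `σ ⊆ F` but `u ∈ τ ∖ F`, the facet `G ⊇ F` contains `τ`, so the ridge
`G ∖ {u}` contains `σ` but not `τ`.
-/

noncomputable section
attribute [local instance] Classical.propDecidable

/-- The simplicial complex generated by a set of faces: all nonempty subsets. -/
def gen {V : Type} (S : Finset (Finset V)) : Finset (Finset V) :=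
  S.biUnion fun F => F.powerset.filter (· ≠ ∅)

/-- The facets (maximal faces) of a complex given by its finite set of faces. -/
def facets {V : Type} (Δ : Finset (Finset V)) : Finset (Finset V) :=
  Δ.filter fun F => ∀ G ∈ Δ, F ⊆ G → F = G

/-- A (finite, abstract) simplicial complex: nonempty faces, closed under nonempty subsets. -/
def IsComplex {V : Type} (Δ : Finset (Finset V)) : Prop :=
  ∅ ∉ Δ ∧ ∀ F ∈ Δ, ∀ G, G ⊆ F → G ≠ ∅ → G ∈ Δ

/-- `F` is a leaf of `Δ`: `F` is a facet which is either the only facet, or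
there is another facet `G` (a joint) with `F ∩ (Δ ∖ F) ⊆ G`, i.e. the
intersection of `F` with any other facet is contained in `G`. -/
def IsLeaf {V : Type} (Δ : Finset (Finset V)) (F : Finset V) : Prop :=
  F ∈ facets Δ ∧ (facets Δ = {F} ∨
    ∃ G ∈ facets Δ, G ≠ F ∧ ∀ H ∈ facets Δ, H ≠ F → F ∩ H ⊆ G)

def HasLeaf {V : Type} (Δ : Finset (Finset V)) : Prop := ∃ F, IsLeaf Δ F

/-- A forest: every nonempty subcollection (complex generated by a subset of the
facets) has a leaf. -/
def IsForest {V : Type} (Δ : Finset (Finset V)) : Prop :=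
  ∀ S ⊆ facets Δ, S.Nonempty → HasLeaf (gen S)

/-- Vertex set of a complex. -/
def vtx {V : Type} (Δ : Finset (Finset V)) : Finset V := Δ.sup id

/-- Connectedness: nonempty, and any two vertices are joined by a chain of faces. -/
def Conn {V : Type} (Δ : Finset (Finset V)) : Prop :=
  Δ.Nonempty ∧ ∀ u ∈ vtx Δ, ∀ v ∈ vtx Δ,
    Relation.ReflTransGen (fun a b => ∃ σ ∈ Δ, a ∈ σ ∧ b ∈ σ) u v

/-- A simplicial tree is a connected forest. -/
def IsTree {V : Type} (Δ : Finset (Finset V)) : Prop := Conn Δ ∧ IsForest Δ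

/-! Monomials in the variables `x_σ`, indexed by the nonempty faces `σ` of a complex
`Δ`.  All monomials arising in the Peeva–Velasco construction and its refinement are
squarefree, so we represent a squarefree monomial by its finite set of variables
(a `Finset` of faces); then divisibility is `⊆`, lcm is `∪`, and a product of
monomials with disjoint supports is `∪`. -/

/-- The Peeva–Velasco generator `m_v = ∏_{σ ∈ Δ, v ∉ σ} x_σ`. -/
def mPV {V : Type} (Δ : Finset (Finset V)) (v : V) : Finset (Finset V) :=
  Δ.filter fun σ => v ∉ σ

/-- `A_Δ(v)`: the facets of `Δ` not containing `v`. -/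
def AF {V : Type} (Δ : Finset (Finset V)) (v : V) : Finset (Finset V) :=
  (facets Δ).filter fun F => v ∉ F

/-- `B_Δ(v)`: the facets of `Δ` containing `v`. -/
def BF {V : Type} (Δ : Finset (Finset V)) (v : V) : Finset (Finset V) :=
  (facets Δ).filter fun F => v ∈ F

/-- The refined generator `m'_v`: the squarefree product of the variables
`x_{G∖{v}}` for facets `G ∋ v`, the variables `x_F` for facets `F ∌ v`, and the
variables `x_σ` for maximal proper (nonempty) faces `σ` of such facets `F`. -/
def mPV' {V : Type} (Δ : Finset (Finset V)) (v : V) : Finset (Finset V) :=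
  ((BF Δ v).image (fun G => G.erase v)).filter (· ≠ ∅) ∪ AF Δ v ∪
    (AF Δ v).biUnion fun F => F.powerset.filter fun σ => σ.card + 1 = F.card ∧ σ ≠ ∅

/-- `Δ` is the boundary of the full simplex on its `n` vertices: all proper
nonempty subsets of the vertex set. -/
def IsBoundaryOfFullSimplex {n : ℕ} (Δ : Finset (Finset (Fin n))) : Prop :=
  Δ = (Finset.univ : Finset (Fin n)).powerset.filter
        fun s => s ≠ ∅ ∧ s ≠ Finset.univ

open Finset

variable {V : Type}

theorem biUnion_filter_not_mem [DecidableEq V] (S : Finset (Finset V)) (σ : Finset V) :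
    σ.biUnion (fun v => S.filter (v ∉ ·)) = S.filter (¬ σ ⊆ ·) := by
  ext η
  simp only [mem_biUnion, mem_filter, not_subset]
  tauto

theorem biUnion_filter_not_mem_eq_iff [DecidableEq V] (S : Finset (Finset V)) (σ τ : Finset V) :
    σ.biUnion (fun v => S.filter (v ∉ ·)) = τ.biUnion (fun v => S.filter (v ∉ ·)) ↔
      ∀ η ∈ S, σ ⊆ η ↔ τ ⊆ η := by
  simp only [biUnion_filter_not_mem, filter_inj', not_iff_not]

theorem exists_facet_superset {Δ : Finset (Finset V)} {F : Finset V} (hF : F ∈ Δ) :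
    ∃ G ∈ facets Δ, F ⊆ G := by
  obtain ⟨G, hFG, hG⟩ := Δ.exists_le_maximal hF
  exact ⟨G, mem_filter.2 ⟨hG.prop, fun H hH hGH => hG.eq_of_le hH hGH⟩, hFG⟩

theorem facets_subset (Δ : Finset (Finset V)) : facets Δ ⊆ Δ := filter_subset _ _

def ridges (Δ : Finset (Finset V)) : Finset (Finset V) :=
  (facets Δ).biUnion fun F => F.powerset.filter fun σ => σ.card + 1 = F.card ∧ σ ≠ ∅

theorem mem_ridges {Δ : Finset (Finset V)} {η : Finset V} :
    η ∈ ridges Δ ↔ ∃ G ∈ facets Δ, η ⊆ G ∧ η.card + 1 = G.card ∧ η ≠ ∅ := by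
  simp only [ridges, mem_biUnion, mem_filter, mem_powerset]

theorem mPV'_eq_filter [DecidableEq V] (Δ : Finset (Finset V)) :
    mPV' Δ = fun v => (facets Δ ∪ ridges Δ).filter (v ∉ ·) := by
  -- `mPV'` erases with the classical decidable equality
  obtain rfl : ‹DecidableEq V› = fun a b => Classical.propDecidable (a = b) :=
    Subsingleton.elim _ _
  funext v
  ext η
  simp only [mPV', AF, BF, mem_union, mem_filter, mem_image, mem_biUnion, mem_powerset]
  constructor
  · rintro ((⟨⟨G, ⟨hG, hvG⟩, rfl⟩, hne⟩ | ⟨hη, hvη⟩) | ⟨F, ⟨hF, hvF⟩, hηF, hcard, hne⟩)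
    · exact ⟨Or.inr (mem_ridges.2 ⟨G, hG, erase_subset v G, card_erase_add_one hvG, hne⟩),
        notMem_erase v G⟩
    · exact ⟨Or.inl hη, hvη⟩
    · exact ⟨Or.inr (mem_ridges.2 ⟨F, hF, hηF, hcard, hne⟩), fun hv => hvF (hηF hv)⟩
  · rintro ⟨hη | hη, hvη⟩
    · exact Or.inl (Or.inr ⟨hη, hvη⟩)
    obtain ⟨G, hG, hηG, hcard, hne⟩ := mem_ridges.1 hη
    by_cases hvG : v ∈ G
    · have hηGv : η ⊆ G.erase v := fun x hx =>
        mem_erase.2 ⟨ne_of_mem_of_not_mem hx hvη, hηG hx⟩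
      have hcard' : (G.erase v).card ≤ η.card := by
        have := card_erase_add_one hvG
        omega
      exact Or.inl (Or.inl ⟨⟨G, ⟨hG, hvG⟩, (eq_of_subset_of_card_le hηGv hcard').symm⟩, hne⟩)
    · exact Or.inr ⟨G, ⟨hG, hvG⟩, hηG, hcard, hne⟩

theorem mPV_eq_filter [DecidableEq V] (Δ : Finset (Finset V)) :
    mPV Δ = fun v => Δ.filter (v ∉ ·) := by
  funext v
  ext
  simp [mPV]

theorem facets_union_ridges_subset [DecidableEq V] {Δ : Finset (Finset V)} (hΔ : IsComplex Δ) :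
    facets Δ ∪ ridges Δ ⊆ Δ := by
  intro η hη
  rcases mem_union.1 hη with hη | hη
  · exact facets_subset Δ hη
  · obtain ⟨G, hG, hηG, -, hne⟩ := mem_ridges.1 hη
    exact hΔ.2 G (facets_subset Δ hG) η hηG hne

theorem subset_of_forall_facets_union_ridges [DecidableEq V] {Δ : Finset (Finset V)}
    (hΔ : IsComplex Δ) {σ τ : Finset V} (h : ∀ η ∈ facets Δ ∪ ridges Δ, σ ⊆ η → τ ⊆ η)
    {F : Finset V} (hF : F ∈ Δ) (hσF : σ ⊆ F) : τ ⊆ F := by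
  obtain ⟨G, hG, hFG⟩ := exists_facet_superset hF
  have hτG : τ ⊆ G := h G (mem_union_left _ hG) (hσF.trans hFG)
  intro u hu
  by_contra huF
  have hFGu : F ⊆ G.erase u := fun x hx => mem_erase.2 ⟨ne_of_mem_of_not_mem hx huF, hFG hx⟩
  have hridge : G.erase u ∈ ridges Δ := mem_ridges.2 ⟨G, hG, erase_subset u G,
    card_erase_add_one (hτG hu), fun he => hΔ.1 (subset_empty.1 (he ▸ hFGu) ▸ hF)⟩
  exact notMem_erase u G (h _ (mem_union_right _ hridge) (hσF.trans hFGu) hu)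

theorem lcm_mPV'_eq_iff_lcm_mPV_eq_general {n : ℕ} (Δ : Finset (Finset (Fin n)))
    (hΔ : IsComplex Δ) :
    ∀ σ τ : Finset (Fin n),
      σ.biUnion (mPV' Δ) = τ.biUnion (mPV' Δ) ↔
      σ.biUnion (mPV Δ) = τ.biUnion (mPV Δ) := by
  intro σ τ
  rw [mPV'_eq_filter, mPV_eq_filter, biUnion_filter_not_mem_eq_iff,
    biUnion_filter_not_mem_eq_iff]
  constructor
  · intro h F hF
    exact ⟨subset_of_forall_facets_union_ridges hΔ (fun η hη => (h η hη).1) hF,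
      subset_of_forall_facets_union_ridges hΔ (fun η hη => (h η hη).2) hF⟩
  · exact fun h η hη => h η (facets_union_ridges_subset hΔ hη)

/-- Suppose `Δ` (a simplicial complex on `1, …, n`, with every
vertex on a face, not the boundary of a simplex) is the Scarf complex of
`J_Δ = (m_1, …, m_n)` (hypothesis `hScarf`: the nonempty faces of `Δ` are exactly
the subsets of `{1, …, n}` whose lcm label is distinct from that of every other
subset).  Then for any two subsets `σ = {u_1, …, u_s}` and `τ = {v_1, …, v_t}` of
`{1, …, n}`, `lcm(m'_{u_1}, …, m'_{u_s}) = lcm(m'_{v_1}, …, m'_{v_t})` if and only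
if `lcm(m_{u_1}, …, m_{u_s}) = lcm(m_{v_1}, …, m_{v_t})`.  (For squarefree
monomials, lcm of a family is the union of supports.) -/
theorem lcm_mPV'_eq_iff_lcm_mPV_eq {n : ℕ} (Δ : Finset (Finset (Fin n)))
    (hΔ : IsComplex Δ) (hvtx : ∀ v : Fin n, ({v} : Finset (Fin n)) ∈ Δ)
    (hnb : ¬ IsBoundaryOfFullSimplex Δ)
    (hScarf : ∀ σ : Finset (Fin n), σ.Nonempty →
      (σ ∈ Δ ↔ ∀ τ : Finset (Fin n), τ ≠ σ →
        τ.biUnion (mPV Δ) ≠ σ.biUnion (mPV Δ))) :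
    ∀ σ τ : Finset (Fin n),
      σ.biUnion (mPV' Δ) = τ.biUnion (mPV' Δ) ↔
      σ.biUnion (mPV Δ) = τ.biUnion (mPV Δ) :=
  lcm_mPV'_eq_iff_lcm_mPV_eq_general Δ hΔ
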